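/- For any standard λ-tableau t (λ an ℓ-partition of r), one has w_λ = d(t) d(t')^{-1} and ℓ(w_λ) = ℓ(d(t)) + ℓ(d(t')), where t' ∈ Std(λ') is the conjugate tableau of t, d(s) denotes the permutation with t^λ d(s) = s (respectively t^{λ'} d(t') = t'), and w_λ = d(t_λ). -/

import Mathlib

noncomputable section

open scoped BigOperators

/-- Partial sum `l 0 + ⋯ + l (i-1)` of the parts of a composition. -/
def psum (l : ℕ → ℕ) (i : ℕ) : ℕ := ∑ j ∈ Finset.range i, l j

/-- `l : ℕ → ℕ` represents a composition of `r` (positive parts, padded by zeros). -/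
def IsCompositionOf (r : ℕ) (l : ℕ → ℕ) : Prop :=
  (∃ k, k ≤ r ∧ (∀ j, j < k → 0 < l j) ∧ (∀ j, k ≤ j → l j = 0)) ∧ psum l r = r

/-- `l : ℕ → ℕ` represents a partition of `r`. -/
def IsPartitionOf (r : ℕ) (l : ℕ → ℕ) : Prop :=
  IsCompositionOf r l ∧ ∀ i j, i ≤ j → l j ≤ l i

/-- The conjugate (dual) partition of a composition of `r`:
`(conjC r m) j = #{k : m k ≥ j+1}` (0-indexed). -/
def conjC (r : ℕ) (m : ℕ → ℕ) : ℕ → ℕ := fun j =>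
  ((Finset.range r).filter (fun k => j + 1 ≤ m k)).card

open scoped Classical in
/-- The Young subgroup `S_l ≤ S_r` of a composition `l` of `r`, i.e. the permutations
preserving each of the consecutive blocks of sizes `l 0, l 1, …` (this is the row
stabilizer of the row-reading tableau of `l`), as a finset. -/
def youngFinset (r : ℕ) (l : ℕ → ℕ) : Finset (Equiv.Perm (Fin r)) :=
  Finset.univ.filter (fun w => ∀ (p : Fin r) (i : ℕ),
    psum l i ≤ (p : ℕ) → (p : ℕ) < psum l (i + 1) →
      psum l i ≤ (w p : ℕ) ∧ (w p : ℕ) < psum l (i + 1))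

/-- The number of inversions of a permutation of `Fin r`; this equals its Coxeter
length with respect to the simple transpositions. -/
def len (r : ℕ) (w : Equiv.Perm (Fin r)) : ℕ :=
  (Finset.univ.filter (fun p : Fin r × Fin r => p.1 < p.2 ∧ w p.2 < w p.1)).card

/-- `x_l = ∑_{w ∈ S_l} w` in the group algebra `ℂ[S_r]`. -/
def xElt (r : ℕ) (l : ℕ → ℕ) : MonoidAlgebra ℂ (Equiv.Perm (Fin r)) :=
  ∑ w ∈ youngFinset r l, MonoidAlgebra.of ℂ (Equiv.Perm (Fin r)) w

/-- `y_l = ∑_{w ∈ S_l} (-1)^{ℓ(w)} w` in the group algebra `ℂ[S_r]`. -/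
def yElt (r : ℕ) (l : ℕ → ℕ) : MonoidAlgebra ℂ (Equiv.Perm (Fin r)) :=
  ∑ w ∈ youngFinset r l, ((-1 : ℂ) ^ len r w) • MonoidAlgebra.of ℂ (Equiv.Perm (Fin r)) w

/-- `l : ℕ → ℕ → ℕ` represents an `L`-multipartition of `r`: `l c` is the `c`-th
component partition (components and rows padded by zeros). -/
def IsMultipartitionOf (L r : ℕ) (l : ℕ → ℕ → ℕ) : Prop :=
  (∀ c, L ≤ c → ∀ i, l c i = 0) ∧
  (∀ c i j, i ≤ j → l c j ≤ l c i) ∧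
  (∀ c i, r ≤ i → l c i = 0) ∧
  (∑ c ∈ Finset.range L, psum (l c) r) = r

/-- `asum r l i` is the total number of boxes in the first `i` components. -/
def asum (r : ℕ) (l : ℕ → ℕ → ℕ) (i : ℕ) : ℕ := ∑ c ∈ Finset.range i, psum (l c) r

/-- The (0-indexed) row-reading index of the cell in row `a`, column `b` of component `c`
of the multipartition `l`; this is the entry of the maximal standard tableau `t^λ` at
that cell. -/
def rowIdxMP (r : ℕ) (l : ℕ → ℕ → ℕ) (c a b : ℕ) : ℕ := asum r l c + psum (l c) a + b

/-- The conjugate (dual) of an `L`-multipartition of `r`: component `c` of the dual is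
the conjugate of component `L-1-c`. -/
def conjMP (L r : ℕ) (l : ℕ → ℕ → ℕ) : ℕ → ℕ → ℕ := fun c =>
  if c < L then conjC r (l (L - 1 - c)) else fun _ => 0

/-- `d : S_r` encodes the standard `λ`-tableau `t = t^λ d` (whose entry at a cell is `d`
applied to the row-reading index of the cell): entries increase along rows and down
columns of every component. -/
def IsStdMP (r : ℕ) (l : ℕ → ℕ → ℕ) (d : Equiv.Perm (Fin r)) : Prop :=
  (∀ c a b, b + 1 < l c a →
    ∀ (h1 : rowIdxMP r l c a b < r) (h2 : rowIdxMP r l c a (b + 1) < r),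
      d ⟨rowIdxMP r l c a b, h1⟩ < d ⟨rowIdxMP r l c a (b + 1), h2⟩) ∧
  (∀ c a b, b < l c (a + 1) →
    ∀ (h1 : rowIdxMP r l c a b < r) (h2 : rowIdxMP r l c (a + 1) b < r),
      d ⟨rowIdxMP r l c a b, h1⟩ < d ⟨rowIdxMP r l c (a + 1) b, h2⟩)

/-!
If the cell `q` comes after `p` in the row reading of `λ` but `t(q) < t(p)`, standardness of `t`
forbids `q` to lie weakly south-east of `p`; so `q` lies in a later component, or in the same
component strictly west of `p`. Either way the transposed cell of `q` precedes that of `p` in the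
row reading of `λ'`. Hence every inversion of `d(t)` is an inversion of `w_λ = d(t')⁻¹ d(t)`, and
for such a product the inversion counts add up.
-/

lemma psum_succ (f : ℕ → ℕ) (i : ℕ) : psum f (i + 1) = psum f i + f i :=
  Finset.sum_range_succ f i

lemma psum_mono (f : ℕ → ℕ) : Monotone (psum f) := fun _ _ h =>
  Finset.sum_le_sum_of_subset (Finset.range_subset_range.2 h)

lemma exists_psum_le_lt_psum_succ (f : ℕ → ℕ) {k n : ℕ} (h : n < psum f k) :
    ∃ i, psum f i ≤ n ∧ n < psum f (i + 1) := by
  induction k with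
  | zero => simp [psum] at h
  | succ k ih =>
    by_cases hk : n < psum f k
    · exact ih hk
    · exact ⟨k, not_lt.1 hk, h⟩

lemma asum_eq_psum (r : ℕ) (f : ℕ → ℕ → ℕ) : asum r f = psum (fun c => psum (f c) r) := rfl

/-- The shape of a multipartition without the monotonicity of its components. -/
structure IsMulticompositionOf (L r : ℕ) (f : ℕ → ℕ → ℕ) : Prop where
  eq_zero_of_le_comp : ∀ c, L ≤ c → ∀ a, f c a = 0
  eq_zero_of_le_row : ∀ c a, r ≤ a → f c a = 0
  asum_eq : asum r f L = r

namespace IsMulticompositionOf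

variable {L r : ℕ} {f : ℕ → ℕ → ℕ} (hf : IsMulticompositionOf L r f) {c a b c₁ a₁ b₁ : ℕ}
include hf

lemma comp_lt (h : b < f c a) : c < L := by
  by_contra hc
  rw [hf.eq_zero_of_le_comp c (not_lt.1 hc)] at h
  omega

lemma row_lt (h : b < f c a) : a < r := by
  by_contra ha
  rw [hf.eq_zero_of_le_row c a (not_lt.1 ha)] at h
  omega

lemma rowIdxMP_lt_asum_succ (h : b < f c a) : rowIdxMP r f c a b < asum r f (c + 1) := by
  have hrow : psum (f c) (a + 1) ≤ psum (f c) r := psum_mono _ (hf.row_lt h)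
  rw [psum_succ] at hrow
  rw [asum_eq_psum, psum_succ, ← asum_eq_psum, rowIdxMP]
  omega

lemma rowIdxMP_lt (h : b < f c a) : rowIdxMP r f c a b < r :=
  calc rowIdxMP r f c a b < asum r f (c + 1) := hf.rowIdxMP_lt_asum_succ h
    _ ≤ asum r f L := psum_mono _ (hf.comp_lt h)
    _ = r := hf.asum_eq

lemma rowIdxMP_lt_rowIdxMP (h : b < f c a)
    (hlex : c < c₁ ∨ c = c₁ ∧ (a < a₁ ∨ a = a₁ ∧ b < b₁)) :
    rowIdxMP r f c a b < rowIdxMP r f c₁ a₁ b₁ := by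
  rcases hlex with hc | ⟨rfl, ha | ⟨rfl, hb⟩⟩
  · calc rowIdxMP r f c a b < asum r f (c + 1) := hf.rowIdxMP_lt_asum_succ h
      _ ≤ asum r f c₁ := psum_mono _ hc
      _ ≤ rowIdxMP r f c₁ a₁ b₁ := by rw [rowIdxMP]; omega
  · have hrow : psum (f c) (a + 1) ≤ psum (f c) a₁ := psum_mono _ ha
    rw [psum_succ] at hrow
    rw [rowIdxMP, rowIdxMP]
    omega
  · rw [rowIdxMP, rowIdxMP]
    omega

lemma rowIdxMP_lt_rowIdxMP_iff (h : b < f c a) (h₁ : b₁ < f c₁ a₁) :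
    rowIdxMP r f c a b < rowIdxMP r f c₁ a₁ b₁ ↔
      c < c₁ ∨ c = c₁ ∧ (a < a₁ ∨ a = a₁ ∧ b < b₁) := by
  refine ⟨fun hlt => ?_, hf.rowIdxMP_lt_rowIdxMP h⟩
  by_contra hlex
  obtain hlex' | ⟨rfl, rfl, rfl⟩ : (c₁ < c ∨ c₁ = c ∧ (a₁ < a ∨ a₁ = a ∧ b₁ < b)) ∨
      (c₁ = c ∧ a₁ = a ∧ b₁ = b) := by omega
  · exact (hf.rowIdxMP_lt_rowIdxMP h₁ hlex').asymm hlt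
  · exact lt_irrefl _ hlt

lemma exists_rowIdxMP_eq (p : Fin r) :
    ∃ c a b, ∃ h : b < f c a, (⟨rowIdxMP r f c a b, hf.rowIdxMP_lt h⟩ : Fin r) = p := by
  have hp : (p : ℕ) < psum (fun c => psum (f c) r) L := by
    rw [← asum_eq_psum, hf.asum_eq]
    exact p.isLt
  obtain ⟨c, hc₁, hc₂⟩ := exists_psum_le_lt_psum_succ _ hp
  rw [psum_succ] at hc₂
  rw [← asum_eq_psum] at hc₁ hc₂
  obtain ⟨a, ha₁, ha₂⟩ :=
    exists_psum_le_lt_psum_succ (f c) (k := r) (n := p - asum r f c) (by omega)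
  rw [psum_succ] at ha₂
  refine ⟨c, a, p - asum r f c - psum (f c) a, by omega, Fin.ext ?_⟩
  simp only [rowIdxMP]
  omega

end IsMulticompositionOf

section Conjugate

variable {r : ℕ} {m : ℕ → ℕ} {a b : ℕ}

lemma lt_conjC (hm : ∀ i, r ≤ i → m i = 0) (hmono : Antitone m) (hb : b < m a) :
    a < conjC r m b := by
  have ha : a < r := by
    by_contra ha
    rw [hm a (not_lt.1 ha)] at hb
    omega
  have hsub : Finset.range (a + 1) ⊆ (Finset.range r).filter (fun k => b + 1 ≤ m k) := by
    intro j hj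
    rw [Finset.mem_range] at hj
    have := hmono (Nat.le_of_lt_succ hj)
    simp only [Finset.mem_filter, Finset.mem_range]
    omega
  have hcard := Finset.card_le_card hsub
  rw [Finset.card_range] at hcard
  exact hcard

lemma conjC_eq_zero (hle : ∀ k, m k ≤ r) (hb : r ≤ b) : conjC r m b = 0 := by
  rw [conjC, Finset.card_eq_zero, Finset.filter_eq_empty_iff]
  intro k _
  have := hle k
  omega

/-- Double counting the cells of the diagram of `m` by rows and by columns. -/
lemma psum_conjC (hle : ∀ k, m k ≤ r) : psum (conjC r m) r = psum m r := by
  simp_rw [psum, conjC, Finset.card_filter]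
  rw [Finset.sum_comm]
  refine Finset.sum_congr rfl fun k _ => ?_
  rw [← Finset.card_filter]
  have hcol : (Finset.range r).filter (fun j => j + 1 ≤ m k) = Finset.range (m k) := by
    ext j
    have := hle k
    simp only [Finset.mem_filter, Finset.mem_range]
    omega
  rw [hcol, Finset.card_range]

end Conjugate

namespace IsMultipartitionOf

variable {L r : ℕ} {l : ℕ → ℕ → ℕ} (hmp : IsMultipartitionOf L r l) {c a b : ℕ}
include hmp

lemma isMulticompositionOf : IsMulticompositionOf L r l :=
  ⟨hmp.1, hmp.2.2.1, hmp.2.2.2⟩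

lemma apply_le (c k : ℕ) : l c k ≤ r := by
  by_cases hck : c < L ∧ k < r
  · calc l c k ≤ psum (l c) r := Finset.single_le_sum (fun _ _ => Nat.zero_le _)
          (Finset.mem_range.2 hck.2)
      _ ≤ asum r l L := Finset.single_le_sum (f := fun c => psum (l c) r)
          (fun _ _ => Nat.zero_le _) (Finset.mem_range.2 hck.1)
      _ = r := hmp.2.2.2
  · rcases not_and_or.1 hck with hc | hk
    · rw [hmp.1 c (not_lt.1 hc) k]; omega
    · rw [hmp.2.2.1 c k (not_lt.1 hk)]; omega

lemma isMulticompositionOf_conjMP : IsMulticompositionOf L r (conjMP L r l) where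
  eq_zero_of_le_comp c hc a := by rw [conjMP, if_neg (by omega)]
  eq_zero_of_le_row c a ha := by
    rw [conjMP]
    split
    · exact conjC_eq_zero (hmp.apply_le _) ha
    · rfl
  asum_eq := by
    have hcomp : ∀ c ∈ Finset.range L,
        psum (conjMP L r l c) r = psum (conjC r (l (L - 1 - c))) r := fun c hc => by
      rw [conjMP, if_pos (Finset.mem_range.1 hc)]
    rw [asum, Finset.sum_congr rfl hcomp,
      Finset.sum_range_reflect (fun c => psum (conjC r (l c)) r) L,
      Finset.sum_congr rfl fun c _ => psum_conjC (hmp.apply_le c)]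
    exact hmp.2.2.2

lemma lt_conjMP (h : b < l c a) : a < conjMP L r l (L - 1 - c) b := by
  have hc : c < L := hmp.isMulticompositionOf.comp_lt h
  rw [conjMP, if_pos (by omega), show L - 1 - (L - 1 - c) = c by omega]
  exact lt_conjC (hmp.2.2.1 c) (hmp.2.1 c) h

end IsMultipartitionOf

namespace IsStdMP

variable {L r : ℕ} {l : ℕ → ℕ → ℕ} {d : Equiv.Perm (Fin r)}
  (hmp : IsMultipartitionOf L r l) (hd : IsStdMP r l d) {c a b a₁ b₁ : ℕ}
include hmp hd

lemma row_le (hb : b ≤ b₁) (h₁ : b₁ < l c a) (p : rowIdxMP r l c a b < r)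
    (p₁ : rowIdxMP r l c a b₁ < r) : d ⟨rowIdxMP r l c a b, p⟩ ≤ d ⟨rowIdxMP r l c a b₁, p₁⟩ := by
  induction b₁, hb using Nat.le_induction with
  | base => rfl
  | succ k _ ih =>
    have hk : k < l c a := by omega
    exact (ih hk (hmp.isMulticompositionOf.rowIdxMP_lt hk)).trans (hd.1 c a k h₁ _ p₁).le

lemma col_le (ha : a ≤ a₁) (h₁ : b < l c a₁) (p : rowIdxMP r l c a b < r)
    (p₁ : rowIdxMP r l c a₁ b < r) : d ⟨rowIdxMP r l c a b, p⟩ ≤ d ⟨rowIdxMP r l c a₁ b, p₁⟩ := by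
  induction a₁, ha using Nat.le_induction with
  | base => rfl
  | succ k _ ih =>
    have hk : b < l c k := h₁.trans_le (hmp.2.1 c k (k + 1) k.le_succ)
    exact (ih hk (hmp.isMulticompositionOf.rowIdxMP_lt hk)).trans (hd.2 c k b h₁ _ p₁).le

lemma le_of_le (ha : a ≤ a₁) (hb : b ≤ b₁) (h₁ : b₁ < l c a₁) (p : rowIdxMP r l c a b < r)
    (p₁ : rowIdxMP r l c a₁ b₁ < r) :
    d ⟨rowIdxMP r l c a b, p⟩ ≤ d ⟨rowIdxMP r l c a₁ b₁, p₁⟩ := by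
  have h : b₁ < l c a := h₁.trans_le (hmp.2.1 c a a₁ ha)
  have p' := hmp.isMulticompositionOf.rowIdxMP_lt h
  exact (hd.row_le hmp hb h p p').trans (hd.col_le hmp ha h₁ p' p₁)

end IsStdMP

/-- `w` is `w_λ = d(t_λ)`. -/
def IsWLambda (L r : ℕ) (l : ℕ → ℕ → ℕ) (w : Equiv.Perm (Fin r)) : Prop :=
  ∀ c a b, b < l c a →
    ∀ (h1 : rowIdxMP r l c a b < r) (h2 : rowIdxMP r (conjMP L r l) (L - 1 - c) b a < r),
      w ⟨rowIdxMP r l c a b, h1⟩ = ⟨rowIdxMP r (conjMP L r l) (L - 1 - c) b a, h2⟩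

/-- `d'` is `d(t')` for the tableau `t = t^λ d`. -/
def IsConjTableau (L r : ℕ) (l : ℕ → ℕ → ℕ) (d d' : Equiv.Perm (Fin r)) : Prop :=
  ∀ c a b, b < l c a →
    ∀ (h1 : rowIdxMP r l c a b < r) (h2 : rowIdxMP r (conjMP L r l) (L - 1 - c) b a < r),
      d' ⟨rowIdxMP r (conjMP L r l) (L - 1 - c) b a, h2⟩ = d ⟨rowIdxMP r l c a b, h1⟩

namespace IsWLambda

variable {L r : ℕ} {l : ℕ → ℕ → ℕ} {d d' w : Equiv.Perm (Fin r)}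

lemma eq_inv_mul (hmp : IsMultipartitionOf L r l) (hconj : IsConjTableau L r l d d')
    (hw : IsWLambda L r l w) : w = d'⁻¹ * d := by
  ext1 p
  obtain ⟨c, a, b, h, rfl⟩ := hmp.isMulticompositionOf.exists_rowIdxMP_eq p
  have p' := hmp.isMulticompositionOf_conjMP.rowIdxMP_lt (hmp.lt_conjMP h)
  rw [hw c a b h _ p', Equiv.Perm.mul_apply, Equiv.Perm.eq_inv_iff_eq, hconj c a b h _ p']

lemma apply_lt_apply_of_inversion (hmp : IsMultipartitionOf L r l) (hd : IsStdMP r l d)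
    (hw : IsWLambda L r l w) {p q : Fin r} (hpq : p < q) (hdq : d q < d p) : w q < w p := by
  have hf := hmp.isMulticompositionOf
  obtain ⟨c, a, b, h, rfl⟩ := hf.exists_rowIdxMP_eq p
  obtain ⟨c₁, a₁, b₁, h₁, rfl⟩ := hf.exists_rowIdxMP_eq q
  rw [hw c a b h _ (hmp.isMulticompositionOf_conjMP.rowIdxMP_lt (hmp.lt_conjMP h)),
    hw c₁ a₁ b₁ h₁ _ (hmp.isMulticompositionOf_conjMP.rowIdxMP_lt (hmp.lt_conjMP h₁)), Fin.mk_lt_mk]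
  rw [Fin.mk_lt_mk, hf.rowIdxMP_lt_rowIdxMP_iff h h₁] at hpq
  apply hmp.isMulticompositionOf_conjMP.rowIdxMP_lt_rowIdxMP (hmp.lt_conjMP h₁)
  have hc₁ := hf.comp_lt h₁
  rcases hpq with hc | ⟨rfl, hab⟩
  · left
    omega
  · refine Or.inr ⟨rfl, ?_⟩
    by_contra hba
    exact not_le.2 hdq (hd.le_of_le hmp (by omega) (by omega) h₁ _ _)

end IsWLambda

lemma len_inv {r : ℕ} (σ : Equiv.Perm (Fin r)) : len r σ⁻¹ = len r σ := by
  refine Finset.card_bij' (fun p _ => (σ⁻¹ p.2, σ⁻¹ p.1)) (fun p _ => (σ p.2, σ p.1)) ?_ ?_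
    (by simp) (by simp) <;>
  · intro x hx
    simp only [Finset.mem_filter, Finset.mem_univ, true_and] at hx ⊢
    exact ⟨hx.2, by simpa using hx.1⟩

/-- The inversions of `u * d` not shared with `d` are, through `d`, the inversions of `u`. -/
lemma len_mul_of_inversions_subset {r : ℕ} {u d : Equiv.Perm (Fin r)}
    (h : ∀ p q, p < q → d q < d p → (u * d) q < (u * d) p) :
    len r (u * d) = len r u + len r d := by
  unfold len
  rw [← Finset.card_filter_add_card_filter_not (fun x : Fin r × Fin r => d x.2 < d x.1),
    Finset.filter_filter, Finset.filter_filter, add_comm]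
  congr 1
  · refine Finset.card_bij' (fun x _ => (d x.1, d x.2)) (fun y _ => (d.symm y.1, d.symm y.2))
      ?_ ?_ (by simp) (by simp)
    · intro x hx
      simp only [Finset.mem_filter, Finset.mem_univ, true_and, not_lt] at hx ⊢
      exact ⟨hx.2.lt_of_ne (d.injective.ne hx.1.1.ne), hx.1.2⟩
    · intro y hy
      simp only [Finset.mem_filter, Finset.mem_univ, true_and, not_lt, Equiv.Perm.mul_apply,
        Equiv.apply_symm_apply] at hy ⊢
      refine ⟨⟨?_, hy.2⟩, hy.1.le⟩
      by_contra hle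
      have hlt : d.symm y.2 < d.symm y.1 := (not_lt.1 hle).lt_of_ne (d.symm.injective.ne hy.1.ne')
      have hu := h _ _ hlt (by simpa using hy.1)
      simp only [Equiv.Perm.mul_apply, Equiv.apply_symm_apply] at hu
      exact hu.not_gt hy.2
  · congr 1
    exact Finset.filter_congr fun x _ =>
      ⟨fun hx => ⟨hx.1.1, hx.2⟩, fun hx => ⟨⟨hx.1, h _ _ hx.1 hx.2⟩, hx.2⟩⟩

/-- With permutations acting on the left, `w_λ = d(t) d(t')⁻¹` reads `w = d'⁻¹ * d`. -/
theorem wlambda_factorization_through_conjugate_general (L r : ℕ) (l : ℕ → ℕ → ℕ)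
    (hmp : IsMultipartitionOf L r l)
    (d d' w : Equiv.Perm (Fin r))
    (hd : IsStdMP r l d)
    (hconj : ∀ c a b, b < l c a →
      ∀ (h1 : rowIdxMP r l c a b < r) (h2 : rowIdxMP r (conjMP L r l) (L - 1 - c) b a < r),
        d' ⟨rowIdxMP r (conjMP L r l) (L - 1 - c) b a, h2⟩ = d ⟨rowIdxMP r l c a b, h1⟩)
    (hw : ∀ c a b, b < l c a →
      ∀ (h1 : rowIdxMP r l c a b < r) (h2 : rowIdxMP r (conjMP L r l) (L - 1 - c) b a < r),
        w ⟨rowIdxMP r l c a b, h1⟩ = ⟨rowIdxMP r (conjMP L r l) (L - 1 - c) b a, h2⟩) :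
    w = d'⁻¹ * d ∧ len r w = len r d + len r d' := by
  have hfac : w = d'⁻¹ * d := IsWLambda.eq_inv_mul hmp hconj hw
  refine ⟨hfac, ?_⟩
  rw [hfac, len_mul_of_inversions_subset, len_inv, add_comm]
  intro p q hpq hdq
  rw [← hfac]
  exact IsWLambda.apply_lt_apply_of_inversion hmp hd hw hpq hdq

/-- Let `l` be an `L`-multipartition of `r`.  Let `d` encode a standard
`λ`-tableau `t` (via `t = t^λ d`), let `d'` encode the conjugate standard `λ'`-tableau
`t'` (so the entry of `t'` at the conjugate cell `(L-1-c, b, a)` equals the entry of `t`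
at `(c, a, b)`), and let `w` be the permutation `w_λ = d(t_λ)` (sending the row-reading
index of each cell of `λ` to the row-reading index of the conjugate cell in `λ'`).
Then `w_λ = d(t) d(t')⁻¹` (in our left-evaluation convention, `w = d'⁻¹ * d`) and
`ℓ(w_λ) = ℓ(d(t)) + ℓ(d(t'))`. -/
theorem wlambda_factorization_through_conjugate (L r : ℕ) (l : ℕ → ℕ → ℕ)
    (hmp : IsMultipartitionOf L r l)
    (d d' w : Equiv.Perm (Fin r))
    (hd : IsStdMP r l d) (hd' : IsStdMP r (conjMP L r l) d')
    (hconj : ∀ c a b, b < l c a →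
      ∀ (h1 : rowIdxMP r l c a b < r) (h2 : rowIdxMP r (conjMP L r l) (L - 1 - c) b a < r),
        d' ⟨rowIdxMP r (conjMP L r l) (L - 1 - c) b a, h2⟩ = d ⟨rowIdxMP r l c a b, h1⟩)
    (hw : ∀ c a b, b < l c a →
      ∀ (h1 : rowIdxMP r l c a b < r) (h2 : rowIdxMP r (conjMP L r l) (L - 1 - c) b a < r),
        w ⟨rowIdxMP r l c a b, h1⟩ = ⟨rowIdxMP r (conjMP L r l) (L - 1 - c) b a, h2⟩) :
    w = d'⁻¹ * d ∧ len r w = len r d + len r d' :=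
  wlambda_factorization_through_conjugate_general L r l hmp d d' w hd hconj hw
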